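/- arXiv:2011.04721 — 9 statements merged into one kernel-verified Lean document; each statement's English description precedes it below -/
import Mathlib

section
/- Let f : ℝⁿ → ℝ be differentiable with L-Lipschitz gradient (L > 0) and σ > 0. Define g(x) ∈ ℝⁿ componentwise by g(x)ᵢ = (f(x + σ eᵢ) − f(x))/σ, where eᵢ is the i-th standard basis vector. Then for every x ∈ ℝⁿ, ‖g(x) − ∇f(x)‖ ≤ L σ √n / 2. -/
/-!
If `f'` is `L`-Lipschitz, the Taylor remainder `φ t = f (x + t • v) - f x - t • f' x v` has
`‖φ' t‖ ≤ L t ‖v‖²`, so comparing it with `L t² ‖v‖² / 2` bounds the remainder at `t = 1`.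
With `v = σ eᵢ` this gives an error of at most `L σ / 2` in each coordinate of the
finite-difference gradient, hence at most `√n · L σ / 2` in Euclidean norm.
-/

open scoped RealInnerProductSpace
open Set

theorem norm_image_add_sub_sub_le_of_lipschitz_fderiv {E F : Type*}
    [NormedAddCommGroup E] [NormedSpace ℝ E] [NormedAddCommGroup F] [NormedSpace ℝ F]
    {f : E → F} {f' : E → E →L[ℝ] F} {L : ℝ} (hf : ∀ y, HasFDerivAt f (f' y) y)
    (x : E) (hlip : ∀ y, ‖f' y - f' x‖ ≤ L * ‖y - x‖) (v : E) :
    ‖f (x + v) - f x - f' x v‖ ≤ L / 2 * ‖v‖ ^ 2 := by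
  let φ : ℝ → F := fun t ↦ f (x + t • v) - f x - t • f' x v
  have hφ : ∀ t, HasDerivAt φ ((f' (x + t • v) - f' x) v) t := fun t ↦ by
    have hline : HasDerivAt (fun s : ℝ ↦ x + s • v) v t := by
      simpa using ((hasDerivAt_id t).smul_const v).const_add x
    convert (((hf _).comp_hasDerivAt t hline).sub_const (f x)).sub
      ((hasDerivAt_id t).smul_const (f' x v)) using 1
    · rfl
    · simp
  have hB : ∀ t, HasDerivAt (fun s ↦ L / 2 * ‖v‖ ^ 2 * s ^ 2) (L * ‖v‖ ^ 2 * t) t := fun t ↦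
    ((hasDerivAt_pow 2 t).const_mul _).congr_deriv (by norm_num; ring)
  have hbound : ∀ t ∈ Ico (0 : ℝ) 1, ‖(f' (x + t • v) - f' x) v‖ ≤ L * ‖v‖ ^ 2 * t :=
    fun t ht ↦ calc
      ‖(f' (x + t • v) - f' x) v‖ ≤ ‖f' (x + t • v) - f' x‖ * ‖v‖ :=
        ContinuousLinearMap.le_opNorm _ _
      _ ≤ L * ‖t • v‖ * ‖v‖ := by gcongr; simpa using hlip (x + t • v)
      _ = L * ‖v‖ ^ 2 * t := by rw [norm_smul, Real.norm_of_nonneg ht.1]; ring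
  simpa [φ] using image_norm_le_of_norm_deriv_right_le_deriv_boundary
    (fun t _ ↦ (hφ t).continuousAt.continuousWithinAt) (fun t _ ↦ (hφ t).hasDerivWithinAt)
    (by simp [φ]) hB hbound (right_mem_Icc.2 zero_le_one)

theorem abs_image_add_sub_sub_inner_le_of_lipschitz_gradient {E : Type*}
    [NormedAddCommGroup E] [InnerProductSpace ℝ E] [CompleteSpace E]
    {f : E → ℝ} {L : ℝ} (hf : Differentiable ℝ f)
    (hlip : ∀ x y, ‖gradient f x - gradient f y‖ ≤ L * ‖x - y‖) (x v : E) :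
    |f (x + v) - f x - ⟪gradient f x, v⟫| ≤ L / 2 * ‖v‖ ^ 2 := by
  refine norm_image_add_sub_sub_le_of_lipschitz_fderiv
    (f' := fun y ↦ InnerProductSpace.toDual ℝ E (gradient f y))
    (fun y ↦ (hf y).hasGradientAt.hasFDerivAt) x (fun y ↦ ?_) v
  rw [← map_sub, LinearIsometryEquiv.norm_map]
  exact hlip y x

theorem EuclideanSpace.norm_le_sqrt_card_mul {ι : Type*} [Fintype ι] {w : EuclideanSpace ℝ ι}
    {c : ℝ} (hw : ∀ i, ‖w i‖ ≤ c) : ‖w‖ ≤ √(Fintype.card ι) * c := by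
  rcases isEmpty_or_nonempty ι with _ | ⟨⟨i⟩⟩
  · simp [Subsingleton.elim w 0]
  have hc : 0 ≤ c := (norm_nonneg _).trans (hw i)
  rw [EuclideanSpace.norm_eq, ← Real.sqrt_sq hc, ← Real.sqrt_mul (Nat.cast_nonneg _)]
  gcongr
  calc ∑ i, ‖w i‖ ^ 2 ≤ ∑ _i : ι, c ^ 2 := by gcongr with i; exact hw i
    _ = Fintype.card ι * c ^ 2 := by simp

theorem stmt_1_general {n : ℕ} (f : EuclideanSpace ℝ (Fin n) → ℝ) (L σ : ℝ)
    (hσ : 0 < σ)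
    (hdiff : Differentiable ℝ f)
    (hlip : ∀ x y, ‖gradient f x - gradient f y‖ ≤ L * ‖x - y‖)
    (g : EuclideanSpace ℝ (Fin n) → EuclideanSpace ℝ (Fin n))
    (hg : ∀ x i, g x i = (f (x + σ • EuclideanSpace.single i 1) - f x) / σ)
    (x : EuclideanSpace ℝ (Fin n)) :
    ‖g x - gradient f x‖ ≤ L * σ * Real.sqrt n / 2 := by
  have hcoord : ∀ i, ‖(g x - gradient f x) i‖ ≤ L * σ / 2 := fun i ↦ by
    have hnorm : ‖σ • EuclideanSpace.single i (1 : ℝ)‖ = σ := by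
      simp [norm_smul, abs_of_pos hσ]
    have hinner : ⟪gradient f x, σ • EuclideanSpace.single i 1⟫ = σ * gradient f x i := by
      rw [real_inner_smul_right, EuclideanSpace.inner_single_right, one_mul,
        conj_trivial]
    have htaylor := abs_image_add_sub_sub_inner_le_of_lipschitz_gradient hdiff hlip x
      (σ • EuclideanSpace.single i 1)
    rw [hnorm, hinner] at htaylor
    have hquot : (g x - gradient f x) i
        = (f (x + σ • EuclideanSpace.single i 1) - f x - σ * gradient f x i) / σ := by
      rw [PiLp.sub_apply, hg x i]; field_simp
    rw [hquot, Real.norm_eq_abs, abs_div, abs_of_pos hσ, div_le_iff₀ hσ]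
    linarith
  calc ‖g x - gradient f x‖ ≤ √n * (L * σ / 2) := by
        simpa using EuclideanSpace.norm_le_sqrt_card_mul hcoord
    _ = L * σ * √n / 2 := by ring

/-- Coordinate-wise forward finite-differencing gradient approximation with sampling
radius `σ` is accurate to within `L * σ * √n / 2` when `f` has `L`-Lipschitz gradient. -/
theorem stmt_1 {n : ℕ} (f : EuclideanSpace ℝ (Fin n) → ℝ) (L σ : ℝ)
    (hL : 0 < L) (hσ : 0 < σ)
    (hdiff : Differentiable ℝ f)
    (hlip : ∀ x y, ‖gradient f x - gradient f y‖ ≤ L * ‖x - y‖)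
    (g : EuclideanSpace ℝ (Fin n) → EuclideanSpace ℝ (Fin n))
    (hg : ∀ x i, g x i = (f (x + σ • EuclideanSpace.single i 1) - f x) / σ)
    (x : EuclideanSpace ℝ (Fin n)) :
    ‖g x - gradient f x‖ ≤ L * σ * Real.sqrt n / 2 :=
  stmt_1_general f L σ hσ hdiff hlip g hg x
end

section
/- Let f : ℝⁿ → ℝ be differentiable, m-strongly convex, and have L-Lipschitz gradient, with 0 < m ≤ L. Let x ∈ ℝⁿ and let d ∈ ℝⁿ be a descent direction at x (⟨d, ∇f(x)⟩ < 0). If t > 0 satisfies the Armijo condition with equality, f(x + t d) = f(x) + (t/2)⟨d, ∇f(x)⟩, then (−⟨d, ∇f(x)⟩)/(L‖d‖²) ≤ t ≤ (−⟨d, ∇f(x)⟩)/(m‖d‖²). Moreover, the lower bound requires only the L-Lipschitz gradient hypothesis and the upper bound requires only m-strong convexity. -/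
open scoped RealInnerProductSpace

open AffineMap Set

/-!
Both bounds come from comparing `f` with a quadratic model along the ray `s ↦ x + s • d`.
A Lipschitz gradient makes `L/2 ‖·‖² - f` have a monotone gradient, which yields the descent
lemma `f y ≤ f x + ⟪∇f x, y - x⟫ + L/2 ‖y - x‖²`; strong convexity makes `f - m/2 ‖·‖²`
convex, which yields the reverse inequality with `m` in place of `L`. At `y = x + t • d` the
Armijo equality turns these into `t m ‖d‖² ≤ -⟪d, ∇f x⟫ ≤ t L ‖d‖²`.
-/

variable {E : Type*} [NormedAddCommGroup E] [InnerProductSpace ℝ E] [CompleteSpace E]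

theorem HasGradientAt.sub {f h : E → ℝ} {f' h' x : E} (hf : HasGradientAt f f' x)
    (hh : HasGradientAt h h' x) : HasGradientAt (fun z => f z - h z) (f' - h') x := by
  rw [hasGradientAt_iff_hasFDerivAt, map_sub]
  exact hf.hasFDerivAt.sub hh.hasFDerivAt

theorem HasGradientAt.hasDerivAt_comp_lineMap {f : E → ℝ} {g x y : E} {s : ℝ}
    (hf : HasGradientAt f g (lineMap x y s)) :
    HasDerivAt (fun s : ℝ => f (lineMap x y s)) ⟪g, y - x⟫ s :=
  hf.hasFDerivAt.comp_hasDerivAt s hasDerivAt_lineMap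

theorem hasGradientAt_half_mul_norm_sq (c : ℝ) (x : E) :
    HasGradientAt (fun y => c / 2 * ‖y‖ ^ 2) (c • x) x := by
  rw [hasGradientAt_iff_hasFDerivAt]
  refine ((hasStrictFDerivAt_norm_sq x).hasFDerivAt.const_mul (c / 2)).congr_fderiv ?_
  ext v
  simp
  ring

theorem ConvexOn.add_inner_le_of_hasGradientAt {h : E → ℝ} (hh : ConvexOn ℝ univ h) {g x : E}
    (hg : HasGradientAt h g x) (y : E) : h x + ⟪g, y - x⟫ ≤ h y := by
  have hline : ConvexOn ℝ univ (fun s : ℝ => h (lineMap x y s)) := by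
    have := hh.comp_affineMap (lineMap x y : ℝ →ᵃ[ℝ] E)
    rwa [preimage_univ] at this
  have hderiv : HasDerivAt (fun s : ℝ => h (lineMap x y s)) ⟪g, y - x⟫ 0 :=
    HasGradientAt.hasDerivAt_comp_lineMap (by rwa [lineMap_apply_zero])
  have := hline.le_slope_of_hasDerivAt (mem_univ 0) (mem_univ 1) one_pos hderiv
  simp only [slope_def_field, lineMap_apply_one, lineMap_apply_zero, sub_zero, div_one] at this
  linarith

theorem add_inner_le_of_hasGradientAt_of_monotone {h : E → ℝ} {g : E → E} {x : E}
    (hg : ∀ z, HasGradientAt h (g z) z) (hmono : ∀ z, 0 ≤ ⟪g z - g x, z - x⟫) (y : E) :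
    h x + ⟪g x, y - x⟫ ≤ h y := by
  obtain ⟨ξ, ⟨hξ0, -⟩, hξ⟩ := exists_hasDerivAt_eq_slope (fun s : ℝ => h (lineMap x y s))
    (fun s => ⟪g (lineMap x y s), y - x⟫) one_pos
    (fun s _ => (hg _).hasDerivAt_comp_lineMap.continuousAt.continuousWithinAt)
    (fun s _ => (hg _).hasDerivAt_comp_lineMap)
  have hstep : 0 ≤ ξ * ⟪g (lineMap x y ξ) - g x, y - x⟫ := by
    simpa [lineMap_apply_module', real_inner_smul_right] using hmono (lineMap x y ξ)
  have := nonneg_of_mul_nonneg_right hstep hξ0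
  simp only [lineMap_apply_one, lineMap_apply_zero, sub_zero, div_one] at hξ
  rw [inner_sub_left] at this
  linarith

theorem StrongConvexOn.add_inner_add_le_of_hasGradientAt {f : E → ℝ} {m : ℝ}
    (hf : StrongConvexOn univ m f) {g x : E} (hg : HasGradientAt f g x) (y : E) :
    f x + ⟪g, y - x⟫ + m / 2 * ‖y - x‖ ^ 2 ≤ f y := by
  have h := (strongConvexOn_iff_convex.1 hf).add_inner_le_of_hasGradientAt
    (hg.sub (hasGradientAt_half_mul_norm_sq m x)) y
  have hsq := norm_add_sq_real x (y - x)
  rw [add_sub_cancel] at hsq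
  rw [inner_sub_left, real_inner_smul_left] at h
  linear_combination h - m / 2 * hsq

theorem le_add_inner_gradient_add_of_lipschitz {f : E → ℝ} {L : ℝ} (hf : Differentiable ℝ f)
    (hlip : ∀ x y, ‖gradient f x - gradient f y‖ ≤ L * ‖x - y‖) (x y : E) :
    f y ≤ f x + ⟪gradient f x, y - x⟫ + L / 2 * ‖y - x‖ ^ 2 := by
  have hmono (z : E) : 0 ≤ ⟪(L • z - gradient f z) - (L • x - gradient f x), z - x⟫ := by
    have hcs := real_inner_le_norm (gradient f z - gradient f x) (z - x)
    have := mul_le_mul_of_nonneg_right (hlip z x) (norm_nonneg (z - x))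
    rw [sub_sub_sub_comm, ← smul_sub, inner_sub_left, real_inner_smul_left,
      real_inner_self_eq_norm_sq]
    linarith
  have h := add_inner_le_of_hasGradientAt_of_monotone
    (fun z => (hasGradientAt_half_mul_norm_sq L z).sub (hf z).hasGradientAt) hmono y
  have hsq := norm_add_sq_real x (y - x)
  rw [add_sub_cancel] at hsq
  rw [inner_sub_left, real_inner_smul_left] at h
  linear_combination h + L / 2 * hsq

theorem neg_inner_gradient_le_of_lipschitz_of_armijo_ge {f : E → ℝ} {L : ℝ}
    (hf : Differentiable ℝ f) (hlip : ∀ x y, ‖gradient f x - gradient f y‖ ≤ L * ‖x - y‖)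
    {x d : E} {t : ℝ} (ht : 0 < t) (harmijo : f x + t / 2 * ⟪d, gradient f x⟫ ≤ f (x + t • d)) :
    -⟪d, gradient f x⟫ ≤ t * (L * ‖d‖ ^ 2) := by
  have h := le_add_inner_gradient_add_of_lipschitz hf hlip x (x + t • d)
  rw [add_sub_cancel_left, real_inner_smul_right, real_inner_comm, norm_smul, mul_pow,
    Real.norm_eq_abs, sq_abs] at h
  have : t * -⟪d, gradient f x⟫ ≤ t * (t * (L * ‖d‖ ^ 2)) := by linarith
  exact le_of_mul_le_mul_left this ht

theorem le_neg_inner_gradient_of_strongConvexOn_of_armijo_le {f : E → ℝ} {m : ℝ}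
    (hf : StrongConvexOn univ m f) {x d : E} (hfx : DifferentiableAt ℝ f x) {t : ℝ} (ht : 0 < t)
    (harmijo : f (x + t • d) ≤ f x + t / 2 * ⟪d, gradient f x⟫) :
    t * (m * ‖d‖ ^ 2) ≤ -⟪d, gradient f x⟫ := by
  have h := hf.add_inner_add_le_of_hasGradientAt hfx.hasGradientAt (x + t • d)
  rw [add_sub_cancel_left, real_inner_smul_right, real_inner_comm, norm_smul, mul_pow,
    Real.norm_eq_abs, sq_abs] at h
  have : t * (t * (m * ‖d‖ ^ 2)) ≤ t * -⟪d, gradient f x⟫ := by linarith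
  exact le_of_mul_le_mul_left this ht

/-- Bounds on the step size `t` satisfying the Armijo condition (parameter `1/2`)
with equality, for an `m`-strongly convex function with `L`-Lipschitz gradient. -/
theorem stmt_2 {n : ℕ} (f : EuclideanSpace ℝ (Fin n) → ℝ) (m L : ℝ)
    (hm : 0 < m) (hmL : m ≤ L)
    (hdiff : Differentiable ℝ f)
    (hconv : ConvexOn ℝ Set.univ (fun y => f y - m / 2 * ‖y‖ ^ 2))
    (hlip : ∀ x y, ‖gradient f x - gradient f y‖ ≤ L * ‖x - y‖)
    (x d : EuclideanSpace ℝ (Fin n)) (hdesc : ⟪d, gradient f x⟫ < 0)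
    (t : ℝ) (ht : 0 < t)
    (harmijo : f (x + t • d) = f x + t / 2 * ⟪d, gradient f x⟫) :
    -⟪d, gradient f x⟫ / (L * ‖d‖ ^ 2) ≤ t ∧ t ≤ -⟪d, gradient f x⟫ / (m * ‖d‖ ^ 2) := by
  have hd : 0 < ‖d‖ ^ 2 := by
    have : d ≠ 0 := by rintro rfl; simp at hdesc
    positivity
  constructor
  · rw [div_le_iff₀ (by have := hm.trans_le hmL; positivity)]
    exact neg_inner_gradient_le_of_lipschitz_of_armijo_ge hdiff hlip ht harmijo.ge
  · rw [le_div_iff₀ (by positivity)]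
    exact le_neg_inner_gradient_of_strongConvexOn_of_armijo_le (strongConvexOn_iff_convex.2 hconv)
      (hdiff x) ht harmijo.le
end

section
/- Let f : ℝⁿ → ℝ be differentiable, m-strongly convex, and have L-Lipschitz gradient with 0 < m ≤ L. Let x ∈ ℝⁿ, let d ≠ 0 be a descent direction at x (⟨d, ∇f(x)⟩ < 0), set γ = (−⟨d, ∇f(x)⟩)/‖d‖², and let t₊ be a minimizer of t ↦ f(x + t d) over t ∈ ℝ. Then (γ/m)(1 − √(1 − m/L)) ≤ t₊ ≤ (γ/m)(1 + √(1 − m/L)). -/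
/-!
Along the line `t ↦ x + t • d`, strong convexity bounds `f` below by the quadratic
`f x - γ‖d‖² t + (m/2)‖d‖² t²`, and the Lipschitz gradient bounds it above by the same
expression with `L` in place of `m`. Comparing the lower model at `t₊` with the upper model at its
minimizer `γ / L` gives `m/2 t₊² - γ t₊ + γ²/(2L) ≤ 0`, whose roots are the two claimed bounds.
-/

open scoped RealInnerProductSpace
open Set

theorem ConvexOn.add_fderiv_sub_le {E : Type*} [NormedAddCommGroup E] [NormedSpace ℝ E]
    {g : E → ℝ} {g' : E →L[ℝ] ℝ} {x : E} (hg : ConvexOn ℝ univ g)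
    (hg' : HasFDerivAt g g' x) (y : E) : g x + g' (y - x) ≤ g y := by
  have hline : ConvexOn ℝ univ (g ∘ (AffineMap.lineMap x y : ℝ →ᵃ[ℝ] E)) := by
    simpa using hg.comp_affineMap (AffineMap.lineMap x y : ℝ →ᵃ[ℝ] E)
  have hderiv : HasDerivAt (g ∘ (AffineMap.lineMap x y : ℝ →ᵃ[ℝ] E)) (g' (y - x)) 0 := by
    apply HasFDerivAt.comp_hasDerivAt
    · simpa using hg'
    · exact AffineMap.hasDerivAt_lineMap
  have hslope := hline.le_slope_of_hasDerivAt (mem_univ 0) (mem_univ 1) zero_lt_one hderiv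
  simp only [slope_def_field, Function.comp_apply, AffineMap.lineMap_apply_zero,
    AffineMap.lineMap_apply_one, sub_zero, div_one] at hslope
  linarith

variable {F : Type*} [NormedAddCommGroup F] [InnerProductSpace ℝ F] [CompleteSpace F]

theorem StrongConvexOn.add_inner_add_sq_le {f : F → ℝ} {f' x : F} {m : ℝ}
    (hf : StrongConvexOn univ m f) (hf' : HasGradientAt f f' x) (y : F) :
    f x + ⟪f', y - x⟫ + m / 2 * ‖y - x‖ ^ 2 ≤ f y := by
  have hderiv : HasFDerivAt (fun z => f z - m / 2 * ‖z‖ ^ 2)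
      (InnerProductSpace.toDual ℝ F f' - (m / 2) • (2 • innerSL ℝ x)) x :=
    hf'.hasFDerivAt.sub ((hasStrictFDerivAt_norm_sq x).hasFDerivAt.const_smul (m / 2))
  have h := (strongConvexOn_iff_convex.mp hf).add_fderiv_sub_le hderiv y
  simp only [sub_apply, smul_apply, InnerProductSpace.toDual_apply_apply, innerSL_apply_apply,
    smul_eq_mul, nsmul_eq_mul, Nat.cast_ofNat] at h
  have hsq : ‖y - x‖ ^ 2 = ‖y‖ ^ 2 - 2 * ⟪x, y - x⟫ - ‖x‖ ^ 2 := by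
    rw [norm_sub_sq_real, inner_sub_right, real_inner_self_eq_norm_sq, real_inner_comm]
    ring
  rw [hsq]
  linear_combination h

theorem HasGradientAt.hasDerivAt_comp_add_smul {f : F → ℝ} {f' x h : F} {t : ℝ}
    (hf : HasGradientAt f f' (x + t • h)) :
    HasDerivAt (fun s : ℝ => f (x + s • h)) ⟪f', h⟫ t := by
  have hline : HasDerivAt (fun s : ℝ => x + s • h) h t := by
    simpa using ((hasDerivAt_id t).smul_const h).const_add x
  simpa [Function.comp_def] using hf.hasFDerivAt.comp_hasDerivAt t hline

theorem le_add_inner_gradient_add_sq {f : F → ℝ} {L : ℝ} (hf : Differentiable ℝ f)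
    (hlip : ∀ x y, ‖gradient f x - gradient f y‖ ≤ L * ‖x - y‖) (x y : F) :
    f y ≤ f x + ⟪gradient f x, y - x⟫ + L / 2 * ‖y - x‖ ^ 2 := by
  set h := y - x
  -- `ψ` has monotone derivative since `∇ f` is `L`-Lipschitz; its tangent at `0` lies below it.
  set ψ : ℝ → ℝ := fun t => L / 2 * ‖h‖ ^ 2 * t ^ 2 - f (x + t • h)
  have hψ : ∀ t, HasDerivAt ψ (L * ‖h‖ ^ 2 * t - ⟪gradient f (x + t • h), h⟫) t := by
    intro t
    have hquad := (hasDerivAt_pow 2 t).const_mul (L / 2 * ‖h‖ ^ 2)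
    have hline := (hf (x + t • h)).hasGradientAt.hasDerivAt_comp_add_smul
    exact (hquad.sub hline).congr_deriv (by ring)
  have hmono : Monotone (deriv ψ) := by
    intro s t hst
    simp only [(hψ _).deriv]
    have hcomp : ⟪gradient f (x + t • h) - gradient f (x + s • h), h⟫
        ≤ L * ‖h‖ ^ 2 * (t - s) :=
      calc _ ≤ ‖gradient f (x + t • h) - gradient f (x + s • h)‖ * ‖h‖ :=
            real_inner_le_norm _ _
        _ ≤ L * ‖(x + t • h) - (x + s • h)‖ * ‖h‖ := by gcongr; exact hlip _ _
        _ = L * ‖h‖ ^ 2 * (t - s) := by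
          rw [add_sub_add_left_eq_sub, ← sub_smul, norm_smul,
            Real.norm_of_nonneg (sub_nonneg.2 hst)]
          ring
    rw [inner_sub_left] at hcomp
    linarith
  have hconv := hmono.convexOn_univ_of_deriv fun t => (hψ t).differentiableAt
  have hslope := hconv.le_slope_of_hasDerivAt (mem_univ 0) (mem_univ 1) zero_lt_one (hψ 0)
  simp only [ψ, slope_def_field, zero_smul, one_smul, add_zero, mul_zero, mul_one, one_pow,
    sub_zero, div_one, zero_pow two_ne_zero, show x + h = y from add_sub_cancel x y] at hslope
  linarith

theorem le_and_le_of_quadratic_nonpos {m L g t : ℝ} (hm : 0 < m) (hmL : m ≤ L) (hg : 0 ≤ g)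
    (ht : m / 2 * t ^ 2 - g * t + g ^ 2 / (2 * L) ≤ 0) :
    g / m * (1 - √(1 - m / L)) ≤ t ∧ t ≤ g / m * (1 + √(1 - m / L)) := by
  have hL : 0 < L := hm.trans_le hmL
  have hsq : (t - g / m) ^ 2 ≤ (g / m) ^ 2 * (1 - m / L) := by
    have hexpand : (g / m) ^ 2 * (1 - m / L) - (t - g / m) ^ 2
        = -(2 / m) * (m / 2 * t ^ 2 - g * t + g ^ 2 / (2 * L)) := by
      field_simp
      ring
    have hnonneg : 0 ≤ -(2 / m) * (m / 2 * t ^ 2 - g * t + g ^ 2 / (2 * L)) :=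
      mul_nonneg_of_nonpos_of_nonpos (by simp only [neg_nonpos]; positivity) ht
    linarith
  have habs := Real.abs_le_sqrt hsq
  rw [Real.sqrt_mul' _ (sub_nonneg.2 ((div_le_one hL).2 hmL)),
    Real.sqrt_sq (div_nonneg hg hm.le), abs_le] at habs
  constructor <;> linarith [habs.1, habs.2]

/-- Bounds on the exact line search minimizer `t₊` along a descent direction, for an
`m`-strongly convex function with `L`-Lipschitz gradient:
`(γ/m)(1 − √(1 − m/L)) ≤ t₊ ≤ (γ/m)(1 + √(1 − m/L))` where `γ = −⟨d, ∇f(x)⟩/‖d‖²`. -/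
theorem stmt_4 {n : ℕ} (f : EuclideanSpace ℝ (Fin n) → ℝ) (m L : ℝ)
    (hm : 0 < m) (hmL : m ≤ L)
    (hdiff : Differentiable ℝ f)
    (hconv : ConvexOn ℝ Set.univ (fun y => f y - m / 2 * ‖y‖ ^ 2))
    (hlip : ∀ x y, ‖gradient f x - gradient f y‖ ≤ L * ‖x - y‖)
    (x d : EuclideanSpace ℝ (Fin n)) (hd : d ≠ 0)
    (hdesc : ⟪d, gradient f x⟫ < 0)
    (γ : ℝ) (hγ : γ = -⟪d, gradient f x⟫ / ‖d‖ ^ 2)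
    (tplus : ℝ) (htplus : ∀ t : ℝ, f (x + tplus • d) ≤ f (x + t • d)) :
    γ / m * (1 - Real.sqrt (1 - m / L)) ≤ tplus ∧
      tplus ≤ γ / m * (1 + Real.sqrt (1 - m / L)) := by
  have hL : 0 < L := hm.trans_le hmL
  have hD : 0 < ‖d‖ ^ 2 := by positivity
  have hγ_nonneg : 0 ≤ γ := hγ ▸ div_nonneg (by linarith) hD.le
  have hslope : ⟪gradient f x, d⟫ = -γ * ‖d‖ ^ 2 := by
    rw [hγ, real_inner_comm]
    field_simp
  have hline : ∀ t : ℝ, ⟪gradient f x, x + t • d - x⟫ = -γ * ‖d‖ ^ 2 * t ∧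
      ‖x + t • d - x‖ ^ 2 = ‖d‖ ^ 2 * t ^ 2 := fun t => by
    rw [add_sub_cancel_left, inner_smul_right, hslope, norm_smul, Real.norm_eq_abs, mul_pow,
      sq_abs]
    constructor <;> ring
  have hlower := (strongConvexOn_iff_convex.mpr hconv).add_inner_add_sq_le
    (hdiff x).hasGradientAt (x + tplus • d)
  have hupper := le_add_inner_gradient_add_sq hdiff hlip x (x + (γ / L) • d)
  rw [(hline _).1, (hline _).2] at hlower hupper
  have hkey : ‖d‖ ^ 2 * (m / 2 * tplus ^ 2 - γ * tplus + γ ^ 2 / (2 * L)) ≤ 0 := by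
    have hvalue : -γ * ‖d‖ ^ 2 * (γ / L) + L / 2 * (‖d‖ ^ 2 * (γ / L) ^ 2)
        = -(‖d‖ ^ 2 * (γ ^ 2 / (2 * L))) := by
      field_simp
      ring
    linarith [htplus (γ / L)]
  exact le_and_le_of_quadratic_nonpos hm hmL hγ_nonneg (nonpos_of_mul_nonpos_right hkey hD)
end

section
/- Let f : ℝⁿ → ℝ be differentiable, m-strongly convex, and have L-Lipschitz gradient with 0 < m ≤ L. Let x ∈ ℝⁿ, let d ≠ 0 be a descent direction at x (⟨d, ∇f(x)⟩ < 0), set γ = (−⟨d, ∇f(x)⟩)/‖d‖², and let c₂ ∈ (0, 1). If t > 0 satisfies both the Armijo condition f(x + t d) ≤ f(x) + (t/2)⟨d, ∇f(x)⟩ and the strong Wolfe curvature condition |⟨d, ∇f(x + t d)⟩| ≤ c₂ |⟨d, ∇f(x)⟩|, then γ(1 − c₂)/L ≤ t ≤ γ/m. Moreover the lower bound requires only the curvature condition and the L-Lipschitz gradient hypothesis, and the upper bound requires only the Armijo condition and m-strong convexity. -/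
open scoped RealInnerProductSpace

/-!
Strong convexity gives the quadratic minorant
`f (x + t • d) ≥ f x + t ⟪d, ∇f x⟫ + (m/2) t² ‖d‖²`, which against the Armijo condition forces
`m t ‖d‖² ≤ -⟪d, ∇f x⟫`. The curvature condition gives
`⟪d, ∇f (x + t • d) - ∇f x⟫ ≥ (1 - c₂) (-⟪d, ∇f x⟫)`, and Cauchy–Schwarz with the Lipschitz
bound caps the left side by `L t ‖d‖²`. Dividing by `‖d‖²` gives both bounds on `t`.
-/

theorem ConvexOn.add_fderiv_le {E : Type*} [NormedAddCommGroup E] [NormedSpace ℝ E]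
    {φ : E → ℝ} {φ' : E →L[ℝ] ℝ} {x : E} (hφ : ConvexOn ℝ Set.univ φ)
    (hx : HasFDerivAt φ φ' x) (y : E) : φ x + φ' (y - x) ≤ φ y := by
  have hderiv : HasDerivAt (φ ∘ AffineMap.lineMap (k := ℝ) x y) (φ' (y - x)) 0 :=
    hx.comp_hasDerivAt_of_eq 0 AffineMap.hasDerivAt_lineMap (by simp)
  have hslope := (hφ.comp_affineMap _).le_slope_of_hasDerivAt trivial trivial one_pos hderiv
  simp only [slope_def_field, Function.comp_apply, AffineMap.lineMap_apply_one,
    AffineMap.lineMap_apply_zero, sub_zero, div_one] at hslope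
  linarith

section InnerProductSpace

variable {E : Type*} [NormedAddCommGroup E] [InnerProductSpace ℝ E] [CompleteSpace E]
  {f : E → ℝ} {m : ℝ}

theorem add_inner_gradient_add_sq_le_of_convexOn_sub_sq {x : E} (hf : DifferentiableAt ℝ f x)
    (hconv : ConvexOn ℝ Set.univ (fun y => f y - m / 2 * ‖y‖ ^ 2)) (y : E) :
    f x + ⟪gradient f x, y - x⟫ + m / 2 * ‖y - x‖ ^ 2 ≤ f y := by
  have hderiv := hf.hasGradientAt.hasFDerivAt.sub
    ((hasStrictFDerivAt_norm_sq x).hasFDerivAt.const_mul (m / 2))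
  have hfirst := hconv.add_fderiv_le hderiv y
  have hsq : ‖y‖ ^ 2 = ‖x‖ ^ 2 + 2 * ⟪x, y - x⟫ + ‖y - x‖ ^ 2 := by
    rw [← norm_add_sq_real, add_sub_cancel]
  simp only [sub_apply, smul_apply, InnerProductSpace.toDual_apply_apply, coe_innerSL_apply,
    nsmul_eq_mul, Nat.cast_ofNat, smul_eq_mul] at hfirst
  rw [hsq] at hfirst
  linarith

variable {x d : E} {t : ℝ}

theorem mul_mul_sq_norm_le_neg_inner_of_armijo (hf : DifferentiableAt ℝ f x)
    (hconv : ConvexOn ℝ Set.univ (fun y => f y - m / 2 * ‖y‖ ^ 2)) (ht : 0 < t)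
    (harmijo : f (x + t • d) ≤ f x + t / 2 * ⟪d, gradient f x⟫) :
    m * t * ‖d‖ ^ 2 ≤ -⟪d, gradient f x⟫ := by
  have hquad := add_inner_gradient_add_sq_le_of_convexOn_sub_sq hf hconv (x + t • d)
  rw [add_sub_cancel_left, inner_smul_right, norm_smul, Real.norm_of_nonneg ht.le,
    real_inner_comm] at hquad
  have hscaled : t * (m * t * ‖d‖ ^ 2 + ⟪d, gradient f x⟫) ≤ t * 0 := by nlinarith
  linarith [le_of_mul_le_mul_left hscaled ht]

theorem mul_neg_inner_le_of_abs_inner_le {L c₂ : ℝ}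
    (hlip : ∀ x y, ‖gradient f x - gradient f y‖ ≤ L * ‖x - y‖) (ht : 0 ≤ t)
    (hdesc : ⟪d, gradient f x⟫ ≤ 0)
    (hwolfe : |⟪d, gradient f (x + t • d)⟫| ≤ c₂ * |⟪d, gradient f x⟫|) :
    (1 - c₂) * -⟪d, gradient f x⟫ ≤ L * t * ‖d‖ ^ 2 :=
  calc (1 - c₂) * -⟪d, gradient f x⟫ = -c₂ * |⟪d, gradient f x⟫| - ⟪d, gradient f x⟫ := by
        rw [abs_of_nonpos hdesc]; ring
    _ ≤ ⟪d, gradient f (x + t • d)⟫ - ⟪d, gradient f x⟫ := by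
        linarith [neg_abs_le ⟪d, gradient f (x + t • d)⟫]
    _ = ⟪d, gradient f (x + t • d) - gradient f x⟫ := (inner_sub_right _ _ _).symm
    _ ≤ ‖d‖ * ‖gradient f (x + t • d) - gradient f x‖ := real_inner_le_norm _ _
    _ ≤ ‖d‖ * (L * ‖t • d‖) := by
        gcongr
        simpa using hlip (x + t • d) x
    _ = L * t * ‖d‖ ^ 2 := by rw [norm_smul, Real.norm_of_nonneg ht]; ring

end InnerProductSpace

theorem stmt_5_general {n : ℕ} (f : EuclideanSpace ℝ (Fin n) → ℝ) (m L : ℝ)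
    (hm : 0 < m) (hmL : m ≤ L)
    (hdiff : Differentiable ℝ f)
    (hconv : ConvexOn ℝ Set.univ (fun y => f y - m / 2 * ‖y‖ ^ 2))
    (hlip : ∀ x y, ‖gradient f x - gradient f y‖ ≤ L * ‖x - y‖)
    (x d : EuclideanSpace ℝ (Fin n)) (hd : d ≠ 0)
    (hdesc : ⟪d, gradient f x⟫ < 0)
    (γ : ℝ) (hγ : γ = -⟪d, gradient f x⟫ / ‖d‖ ^ 2)
    (c₂ : ℝ)
    (t : ℝ) (ht : 0 < t)
    (harmijo : f (x + t • d) ≤ f x + t / 2 * ⟪d, gradient f x⟫)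
    (hwolfe : |⟪d, gradient f (x + t • d)⟫| ≤ c₂ * |⟪d, gradient f x⟫|) :
    γ * (1 - c₂) / L ≤ t ∧ t ≤ γ / m := by
  have hd2 : 0 < ‖d‖ ^ 2 := by positivity
  have hγd : -⟪d, gradient f x⟫ = γ * ‖d‖ ^ 2 := by rw [hγ, div_mul_cancel₀ _ hd2.ne']
  have hlower := mul_neg_inner_le_of_abs_inner_le hlip ht.le hdesc.le hwolfe
  have hupper := mul_mul_sq_norm_le_neg_inner_of_armijo (hdiff x) hconv ht harmijo
  rw [hγd] at hlower hupper
  constructor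
  · rw [div_le_iff₀ (hm.trans_le hmL), mul_comm t]
    exact le_of_mul_le_mul_right (by linarith) hd2
  · rw [le_div_iff₀ hm, mul_comm t]
    exact le_of_mul_le_mul_right hupper hd2

/-- Bounds on a step size satisfying both the Armijo condition (parameter `1/2`) and the
strong Wolfe curvature condition (parameter `c₂`), for an `m`-strongly convex function
with `L`-Lipschitz gradient: `γ(1 − c₂)/L ≤ t ≤ γ/m` where `γ = −⟨d, ∇f(x)⟩/‖d‖²`. -/
theorem stmt_5 {n : ℕ} (f : EuclideanSpace ℝ (Fin n) → ℝ) (m L : ℝ)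
    (hm : 0 < m) (hmL : m ≤ L)
    (hdiff : Differentiable ℝ f)
    (hconv : ConvexOn ℝ Set.univ (fun y => f y - m / 2 * ‖y‖ ^ 2))
    (hlip : ∀ x y, ‖gradient f x - gradient f y‖ ≤ L * ‖x - y‖)
    (x d : EuclideanSpace ℝ (Fin n)) (hd : d ≠ 0)
    (hdesc : ⟪d, gradient f x⟫ < 0)
    (γ : ℝ) (hγ : γ = -⟪d, gradient f x⟫ / ‖d‖ ^ 2)
    (c₂ : ℝ) (hc₂ : c₂ ∈ Set.Ioo (0 : ℝ) 1)
    (t : ℝ) (ht : 0 < t)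
    (harmijo : f (x + t • d) ≤ f x + t / 2 * ⟪d, gradient f x⟫)
    (hwolfe : |⟪d, gradient f (x + t • d)⟫| ≤ c₂ * |⟪d, gradient f x⟫|) :
    γ * (1 - c₂) / L ≤ t ∧ t ≤ γ / m :=
  stmt_5_general f m L hm hmL hdiff hconv hlip x d hd hdesc γ hγ c₂ t ht harmijo hwolfe
end

section
/- Let f : ℝⁿ → ℝ be differentiable and m-strongly convex (m > 0) with minimizer x_* and minimum value f_* = f(x_*). Let t_min > 0 and let (x_k) be a sequence with x_{k+1} = x_k − t_k ∇f(x_k) where each t_k ≥ t_min satisfies the Armijo condition f(x_k − t_k ∇f(x_k)) ≤ f(x_k) − (t_k/2)‖∇f(x_k)‖². Then for all k ≥ 0, f(x_k) − f_* ≤ (1 − m t_min)^k (f(x_0) − f_*). -/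
open scoped RealInnerProductSpace

/-! Minimizing the strong-convexity lower bound `f x + ⟪∇f x, y - x⟫ + m/2 ‖y - x‖²` over `y`
gives the Polyak–Łojasiewicz inequality `2m (f x - f_*) ≤ ‖∇f x‖²`. Inserted into the Armijo
decrease `f x_{k+1} ≤ f x_k - t_k/2 ‖∇f x_k‖²`, it contracts the gap `f x_k - f_*` by the factor
`1 - m t_k ≤ 1 - m t_min` at every step. -/

theorem ConvexOn.apply_add_fderiv_sub_le {E : Type*} [NormedAddCommGroup E] [NormedSpace ℝ E]
    {s : Set E} {g : E → ℝ} {g' : E →L[ℝ] ℝ} {x y : E} (hg : ConvexOn ℝ s g) (hx : x ∈ s)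
    (hy : y ∈ s) (hd : HasFDerivAt g g' x) :
    g x + g' (y - x) ≤ g y := by
  have hline : HasDerivAt (AffineMap.lineMap x y : ℝ → E) (y - x) 0 := by
    simpa using AffineMap.hasDerivAt_lineMap (a := x) (b := y) (x := 0)
  have hd' : HasFDerivAt g g' (AffineMap.lineMap x y (0 : ℝ)) := by simpa using hd
  have hslope := (hg.comp_affineMap (AffineMap.lineMap x y)).le_slope_of_hasDerivAt
    (x := 0) (y := 1) (by simpa using hx) (by simpa using hy) one_pos
    (hd'.comp_hasDerivAt 0 hline)
  simp only [slope_def_field, Function.comp_apply, AffineMap.lineMap_apply_zero,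
    AffineMap.lineMap_apply_one, sub_zero, div_one] at hslope
  linarith

theorem apply_add_inner_add_sq_le_of_convexOn_sub_sq {E : Type*} [NormedAddCommGroup E] [InnerProductSpace ℝ E]
    [CompleteSpace E] {f : E → ℝ} {m : ℝ}
    (hconv : ConvexOn ℝ Set.univ (fun y => f y - m / 2 * ‖y‖ ^ 2)) {x g : E} (hf : HasGradientAt f g x) (y : E) :
    f x + ⟪g, y - x⟫ + m / 2 * ‖y - x‖ ^ 2 ≤ f y := by
  have hd := (hasGradientAt_iff_hasFDerivAt.mp hf).sub
    ((hasStrictFDerivAt_norm_sq x).hasFDerivAt.const_mul (m / 2))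
  have h := hconv.apply_add_fderiv_sub_le (Set.mem_univ x) (Set.mem_univ y) hd
  have hy : ‖y‖ ^ 2 = ‖x‖ ^ 2 + 2 * ⟪x, y - x⟫ + ‖y - x‖ ^ 2 := by
    simpa using norm_add_sq_real x (y - x)
  simp only [sub_apply, InnerProductSpace.toDual_apply_apply, smul_apply, innerSL_apply_apply,
    nsmul_eq_mul, Nat.cast_ofNat, smul_eq_mul] at h
  rw [hy] at h
  linarith

theorem two_mul_sub_le_norm_sq_of_convexOn_sub_sq {E : Type*} [NormedAddCommGroup E]
    [InnerProductSpace ℝ E] [CompleteSpace E] {f : E → ℝ} {m : ℝ} (hm : 0 ≤ m)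
    (hconv : ConvexOn ℝ Set.univ (fun y => f y - m / 2 * ‖y‖ ^ 2))
    {x g : E} (hf : HasGradientAt f g x) (y : E) :
    2 * m * (f x - f y) ≤ ‖g‖ ^ 2 := by
  have hfirst := apply_add_inner_add_sq_le_of_convexOn_sub_sq hconv hf y
  have hsq : 0 ≤ ‖m • (y - x) + g‖ ^ 2 := by positivity
  rw [norm_add_sq_real, norm_smul, real_inner_smul_left, Real.norm_eq_abs, mul_pow, sq_abs,
    real_inner_comm] at hsq
  nlinarith [mul_le_mul_of_nonneg_left hfirst (by positivity : 0 ≤ 2 * m)]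

theorem le_geom_of_nonneg {u : ℕ → ℝ} {c : ℝ} (hu : ∀ k, 0 ≤ u k)
    (h : ∀ k, u (k + 1) ≤ c * u k) (n : ℕ) : u n ≤ c ^ n * u 0 := by
  rcases le_or_gt 0 c with hc | hc
  · exact le_geom hc n fun k _ => h k
  -- A negative ratio is only compatible with `u ≥ 0` if the sequence vanishes.
  have hu0 : u 0 = 0 := by nlinarith [h 0, hu 0, hu 1]
  rw [hu0, mul_zero]
  cases n with
  | zero => exact hu0.le
  | succ k => nlinarith [h k, hu k]

/-- Linear convergence of gradient descent with Armijo step sizes bounded below by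
`t_min` on an `m`-strongly convex function:
`f(x_k) − f_* ≤ (1 − m t_min)^k (f(x_0) − f_*)`. -/
theorem stmt_6 {n : ℕ} (f : EuclideanSpace ℝ (Fin n) → ℝ) (m : ℝ) (hm : 0 < m)
    (hdiff : Differentiable ℝ f)
    (hconv : ConvexOn ℝ Set.univ (fun y => f y - m / 2 * ‖y‖ ^ 2))
    (xstar : EuclideanSpace ℝ (Fin n)) (hmin : ∀ y, f xstar ≤ f y)
    (tmin : ℝ) (htmin : 0 < tmin)
    (x : ℕ → EuclideanSpace ℝ (Fin n)) (t : ℕ → ℝ)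
    (ht : ∀ k, tmin ≤ t k)
    (hstep : ∀ k, x (k + 1) = x k - t k • gradient f (x k))
    (harmijo : ∀ k,
      f (x k - t k • gradient f (x k)) ≤ f (x k) - t k / 2 * ‖gradient f (x k)‖ ^ 2) :
    ∀ k : ℕ, f (x k) - f xstar ≤ (1 - m * tmin) ^ k * (f (x 0) - f xstar) := by
  have hgap (k : ℕ) : 0 ≤ f (x k) - f xstar := sub_nonneg.2 (hmin (x k))
  refine le_geom_of_nonneg hgap fun k => ?_
  have hPL := two_mul_sub_le_norm_sq_of_convexOn_sub_sq hm.le hconv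
    (hdiff (x k)).hasGradientAt xstar
  have htk : 0 ≤ t k / 2 := by linarith [ht k]
  calc f (x (k + 1)) - f xstar
      ≤ f (x k) - f xstar - t k / 2 * ‖gradient f (x k)‖ ^ 2 := by
        rw [hstep k]; linarith [harmijo k]
    _ ≤ (1 - m * t k) * (f (x k) - f xstar) := by
        nlinarith [mul_le_mul_of_nonneg_left hPL htk]
    _ ≤ (1 - m * tmin) * (f (x k) - f xstar) := by
        nlinarith [mul_nonneg (mul_nonneg hm.le (sub_nonneg.2 (ht k))) (hgap k)]
end

section
/- Let f : ℝⁿ → ℝ be differentiable and m-strongly convex (m > 0) with minimizer x_* and minimum value f_* = f(x_*). Let x ∈ ℝⁿ, g ∈ ℝⁿ with ‖g − ∇f(x)‖ ≤ ρ for some ρ ≥ 0, and let t > 0 satisfy the approximate Armijo condition f(x − t g) ≤ f(x) − (t/2)‖g‖². Then f(x − t g) − f_* ≤ (1 − m t)(f(x) − f_*) + t ρ ‖∇f(x)‖. -/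
open scoped RealInnerProductSpace

/-!
Strong convexity gives, at the point `x`, the Polyak–Łojasiewicz inequality
`2 m (f x - f_*) ≤ ‖∇f(x)‖²`. Since `g` is within `ρ` of `∇f(x)`, this yields
`m (f x - f_*) ≤ ‖g‖² / 2 + ρ ‖∇f(x)‖`, and the Armijo condition turns the guaranteed decrease
`(t/2) ‖g‖²` into the claimed contraction of the optimality gap.
-/

lemma ConvexOn.add_apply_sub_le_of_hasFDerivAt {E : Type*} [NormedAddCommGroup E]
    [NormedSpace ℝ E] {S : Set E} {f : E → ℝ} {f' : E →L[ℝ] ℝ} {x y : E}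
    (hf : ConvexOn ℝ S f) (hx : x ∈ S) (hy : y ∈ S) (hf' : HasFDerivAt f f' x) :
    f x + f' (y - x) ≤ f y := by
  let L : ℝ →ᵃ[ℝ] E := AffineMap.lineMap x y
  have hL : HasDerivAt (fun s : ℝ => L s) (y - x) 0 := by
    simpa [L, AffineMap.lineMap_apply_module', add_comm] using
      ((hasDerivAt_id (0 : ℝ)).smul_const (y - x)).add_const x
  have hslope := (hf.comp_affineMap L).le_slope_of_hasDerivAt
    (by simpa [L] using hx) (by simpa [L] using hy) one_pos
    (((show L 0 = x by simp [L]) ▸ hf').comp_hasDerivAt (0 : ℝ) hL)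
  simp only [slope_def_field, Function.comp_apply, L, AffineMap.lineMap_apply_one,
    AffineMap.lineMap_apply_zero, sub_zero, div_one] at hslope
  linarith

section InnerProductSpace

variable {E : Type*} [NormedAddCommGroup E] [InnerProductSpace ℝ E] [CompleteSpace E]
  {S : Set E} {f : E → ℝ} {m : ℝ} {x y : E}

lemma StrongConvexOn.add_inner_gradient_add_le (hf : StrongConvexOn S m f) (hx : x ∈ S)
    (hy : y ∈ S) (hd : DifferentiableAt ℝ f x) :
    f x + ⟪gradient f x, y - x⟫ + m / 2 * ‖y - x‖ ^ 2 ≤ f y := by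
  have hq : HasFDerivAt (fun z : E => m / 2 * ‖z‖ ^ 2) ((m / 2) • (2 • innerSL ℝ x)) x :=
    (hasStrictFDerivAt_norm_sq x).hasFDerivAt.const_mul (m / 2)
  have h := (strongConvexOn_iff_convex.mp hf).add_apply_sub_le_of_hasFDerivAt hx hy
    (hd.hasFDerivAt.sub hq)
  have hy_sq : ‖y‖ ^ 2 = ‖x‖ ^ 2 + 2 * ⟪x, y - x⟫ + ‖y - x‖ ^ 2 := by
    simpa using norm_add_sq_real x (y - x)
  simp only [sub_apply, smul_apply, innerSL_apply_apply,
    smul_eq_mul, nsmul_eq_mul, Nat.cast_ofNat] at h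
  rw [inner_gradient_left]
  linear_combination h - m / 2 * hy_sq

lemma StrongConvexOn.two_mul_sub_le_sq_norm_gradient (hf : StrongConvexOn S m f) (hm : 0 ≤ m)
    (hx : x ∈ S) (hy : y ∈ S) (hd : DifferentiableAt ℝ f x) :
    2 * m * (f x - f y) ≤ ‖gradient f x‖ ^ 2 := by
  have hlower := hf.add_inner_gradient_add_le hx hy hd
  have hcs : -(‖gradient f x‖ * ‖y - x‖) ≤ ⟪gradient f x, y - x⟫ :=
    neg_le_of_abs_le (abs_real_inner_le_norm _ _)
  -- minimize the quadratic lower bound in `d = ‖y - x‖`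
  nlinarith [sq_nonneg (‖gradient f x‖ - m * ‖y - x‖)]

end InnerProductSpace

lemma sq_norm_le_sq_norm_add_of_norm_sub_le {E : Type*} [SeminormedAddCommGroup E] {a b : E}
    {ρ : ℝ} (h : ‖a - b‖ ≤ ρ) : ‖b‖ ^ 2 ≤ ‖a‖ ^ 2 + 2 * ρ * ‖b‖ := by
  have hba : ‖b‖ ≤ ‖a‖ + ρ := (norm_le_norm_add_norm_sub a b).trans (by gcongr)
  nlinarith [mul_le_mul_of_nonneg_left hba (norm_nonneg b), sq_nonneg (‖a‖ - ‖b‖)]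

theorem stmt_8_general {n : ℕ} (f : EuclideanSpace ℝ (Fin n) → ℝ) (m : ℝ) (hm : 0 < m)
    (hdiff : Differentiable ℝ f)
    (hconv : ConvexOn ℝ Set.univ (fun y => f y - m / 2 * ‖y‖ ^ 2))
    (xstar : EuclideanSpace ℝ (Fin n))
    (x g : EuclideanSpace ℝ (Fin n)) (ρ : ℝ)
    (hg : ‖g - gradient f x‖ ≤ ρ)
    (t : ℝ) (ht : 0 < t)
    (harmijo : f (x - t • g) ≤ f x - t / 2 * ‖g‖ ^ 2) :
    f (x - t • g) - f xstar ≤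
      (1 - m * t) * (f x - f xstar) + t * ρ * ‖gradient f x‖ := by
  have hPL := (strongConvexOn_iff_convex.mpr hconv).two_mul_sub_le_sq_norm_gradient hm.le
    (Set.mem_univ x) (Set.mem_univ xstar) (hdiff x)
  have hgap : m * (f x - f xstar) ≤ ‖g‖ ^ 2 / 2 + ρ * ‖gradient f x‖ := by
    linarith [sq_norm_le_sq_norm_add_of_norm_sub_le hg]
  nlinarith [mul_le_mul_of_nonneg_left hgap ht.le]

/-- One-step decrease bound for an approximate-gradient step satisfying the approximate
Armijo condition, on an `m`-strongly convex function:
`f(x − t g) − f_* ≤ (1 − m t)(f(x) − f_*) + t ρ ‖∇f(x)‖`. -/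
theorem stmt_8 {n : ℕ} (f : EuclideanSpace ℝ (Fin n) → ℝ) (m : ℝ) (hm : 0 < m)
    (hdiff : Differentiable ℝ f)
    (hconv : ConvexOn ℝ Set.univ (fun y => f y - m / 2 * ‖y‖ ^ 2))
    (xstar : EuclideanSpace ℝ (Fin n)) (hmin : ∀ y, f xstar ≤ f y)
    (x g : EuclideanSpace ℝ (Fin n)) (ρ : ℝ) (hρ : 0 ≤ ρ)
    (hg : ‖g - gradient f x‖ ≤ ρ)
    (t : ℝ) (ht : 0 < t)
    (harmijo : f (x - t • g) ≤ f x - t / 2 * ‖g‖ ^ 2) :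
    f (x - t • g) - f xstar ≤
      (1 - m * t) * (f x - f xstar) + t * ρ * ‖gradient f x‖ :=
  stmt_8_general f m hm hdiff hconv xstar x g ρ hg t ht harmijo
end

section
/- Let f : ℝⁿ → ℝ be differentiable, m-strongly convex, and have L-Lipschitz gradient with 0 < m ≤ L. Let x ∈ ℝⁿ, let u be a unit vector with ⟨u, ∇f(x)⟩ < 0, let s₊ > 0 be the minimizer of s ↦ f(x + s u), and let β ∈ (0, 1). Then for every step size s ∈ [β² s₊, s₊], f(x + s u) ≤ f(x) − (β²/(2m))(1 − √(1 − m/L)) ⟨u, ∇f(x)⟩². -/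
/-!
By the descent lemma, the trial step `-⟪u, ∇f x⟫ / L` along `u` already lowers `f` by
`⟪u, ∇f x⟫² / (2L)`, so the exact line-search minimizer `s₊` does at least as well. Convexity of
`f` along the ray then yields the fraction `s / s₊ ≥ β²` of that decrease at the step `s`, and
`1 - √(1 - m/L) ≤ m/L` converts the constant `β² / (2L)` into the stated one.
-/

open scoped RealInnerProductSpace

section Descent

variable {E : Type*} [NormedAddCommGroup E] [InnerProductSpace ℝ E] [CompleteSpace E]
  {f : E → ℝ} {L : ℝ}

theorem hasDerivAt_comp_add_smul (hf : Differentiable ℝ f) (x v : E) (t : ℝ) :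
    HasDerivAt (fun r : ℝ => f (x + r • v)) ⟪gradient f (x + t • v), v⟫ t := by
  have hline : HasDerivAt (fun r : ℝ => x + r • v) v t := by
    simpa using ((hasDerivAt_id t).smul_const v).const_add x
  exact ((hf _).hasGradientAt.hasFDerivAt.comp_hasDerivAt t hline).congr_deriv
    (by rw [InnerProductSpace.toDual_apply_apply])

theorem le_add_inner_add_sq_of_lipschitz_gradient (hf : Differentiable ℝ f)
    (hlip : ∀ x y, ‖gradient f x - gradient f y‖ ≤ L * ‖x - y‖) (x y : E) :
    f y ≤ f x + ⟪gradient f x, y - x⟫ + L / 2 * ‖y - x‖ ^ 2 := by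
  set v := y - x
  set g : ℝ → ℝ := fun t => f x + t * ⟪gradient f x, v⟫ + L / 2 * t ^ 2 * ‖v‖ ^ 2
    - f (x + t • v)
  have hg : ∀ t, HasDerivAt g (⟪gradient f x, v⟫ + L * t * ‖v‖ ^ 2
      - ⟪gradient f (x + t • v), v⟫) t := by
    intro t
    have hpoly := ((hasDerivAt_id t).mul_const ⟪gradient f x, v⟫).const_add (f x) |>.add
      (((hasDerivAt_pow 2 t).const_mul (L / 2)).mul_const (‖v‖ ^ 2))
    refine (hpoly.sub (hasDerivAt_comp_add_smul hf x v t)).congr_deriv ?_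
    push_cast
    ring
  -- `g` is the gap between the quadratic upper model and `f` on the segment; it starts at `0`.
  have hmono : MonotoneOn g (Set.Ici 0) := by
    refine monotoneOn_of_deriv_nonneg (convex_Ici 0)
      (HasDerivAt.continuousOn fun t _ => hg t)
      (fun t _ => (hg t).differentiableAt.differentiableWithinAt) fun t ht => ?_
    rw [interior_Ici] at ht
    rw [(hg t).deriv, sub_nonneg, ← sub_le_iff_le_add', ← inner_sub_left]
    calc ⟪gradient f (x + t • v) - gradient f x, v⟫
        ≤ ‖gradient f (x + t • v) - gradient f x‖ * ‖v‖ := real_inner_le_norm _ _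
      _ ≤ L * ‖t • v‖ * ‖v‖ := by
          gcongr
          simpa using hlip (x + t • v) x
      _ = L * t * ‖v‖ ^ 2 := by
          rw [norm_smul, Real.norm_of_nonneg ht.le]; ring
  have h01 : g 0 ≤ g 1 := hmono Set.self_mem_Ici (Set.mem_Ici.mpr zero_le_one) zero_le_one
  simp only [g, v, zero_mul, ne_eq, OfNat.ofNat_ne_zero, not_false_eq_true, zero_pow, mul_zero,
    add_zero, zero_smul, sub_self, one_mul, one_pow, mul_one, one_smul, add_sub_cancel] at h01
  linarith

theorem apply_add_smul_le_sub_inner_sq (hf : Differentiable ℝ f)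
    (hlip : ∀ x y, ‖gradient f x - gradient f y‖ ≤ L * ‖x - y‖) (hL : 0 < L)
    (x : E) {u : E} (hu : ‖u‖ = 1) :
    f (x + (-⟪u, gradient f x⟫ / L) • u) ≤ f x - ⟪u, gradient f x⟫ ^ 2 / (2 * L) := by
  set d := ⟪u, gradient f x⟫
  have h := le_add_inner_add_sq_of_lipschitz_gradient hf hlip x (x + (-d / L) • u)
  rw [add_sub_cancel_left, inner_smul_right, norm_smul, real_inner_comm, hu, mul_one,
    Real.norm_eq_abs, sq_abs] at h
  convert h using 1
  field_simp
  ring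

end Descent

theorem ConvexOn.apply_add_smul_le {E : Type*} [AddCommGroup E] [Module ℝ E] {f : E → ℝ}
    (hf : ConvexOn ℝ Set.univ f) (x v : E) {s t : ℝ} (hs : 0 ≤ s) (hst : s ≤ t) (ht : 0 < t) :
    f (x + s • v) ≤ f x + s / t * (f (x + t • v) - f x) := by
  have hpt : (1 - s / t) • x + (s / t) • (x + t • v) = x + s • v := by
    rw [smul_add, smul_smul, div_mul_cancel₀ s ht.ne']
    module
  have h := hf.2 (Set.mem_univ x) (Set.mem_univ (x + t • v))
    (sub_nonneg.mpr ((div_le_one ht).mpr hst)) (div_nonneg hs ht.le) (by ring)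
  rw [hpt, smul_eq_mul, smul_eq_mul] at h
  linarith

theorem one_sub_sqrt_one_sub_le {q : ℝ} (hq : 0 ≤ q) : 1 - √(1 - q) ≤ q := by
  have : 1 - q ≤ √(1 - q) := Real.le_sqrt_self_iff.mpr (by linarith)
  linarith

theorem stmt_12_general {n : ℕ} (f : EuclideanSpace ℝ (Fin n) → ℝ) (m L : ℝ)
    (hm : 0 < m) (hmL : m ≤ L)
    (hdiff : Differentiable ℝ f)
    (hconv : ConvexOn ℝ Set.univ (fun y => f y - m / 2 * ‖y‖ ^ 2))
    (hlip : ∀ x y, ‖gradient f x - gradient f y‖ ≤ L * ‖x - y‖)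
    (x u : EuclideanSpace ℝ (Fin n)) (hu : ‖u‖ = 1)
    (splus : ℝ) (hsplus_pos : 0 < splus)
    (hsplus : ∀ s : ℝ, f (x + splus • u) ≤ f (x + s • u))
    (β : ℝ)
    (s : ℝ) (hs : s ∈ Set.Icc (β ^ 2 * splus) splus) :
    f (x + s • u) ≤
      f x - β ^ 2 / (2 * m) * (1 - Real.sqrt (1 - m / L)) * ⟪u, gradient f x⟫ ^ 2 := by
  have hL : 0 < L := hm.trans_le hmL
  set d := ⟪u, gradient f x⟫
  have hconvex : ConvexOn ℝ Set.univ f :=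
    ((strongConvexOn_iff_convex.mpr hconv).strictConvexOn hm).convexOn
  have hmin : f (x + splus • u) ≤ f x - d ^ 2 / (2 * L) :=
    (hsplus _).trans (apply_add_smul_le_sub_inner_sq hdiff hlip hL x hu)
  have hs₀ : 0 ≤ s := (by positivity : 0 ≤ β ^ 2 * splus).trans hs.1
  have hratio : β ^ 2 ≤ s / splus := (le_div_iff₀ hsplus_pos).mpr hs.1
  have hconst : β ^ 2 / (2 * m) * (1 - √(1 - m / L)) ≤ β ^ 2 / (2 * L) :=
    calc _ ≤ β ^ 2 / (2 * m) * (m / L) := by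
          gcongr
          exact one_sub_sqrt_one_sub_le (by positivity)
      _ = β ^ 2 / (2 * L) := by field_simp
  calc f (x + s • u) ≤ f x + s / splus * (f (x + splus • u) - f x) :=
        hconvex.apply_add_smul_le x u hs₀ hs.2 hsplus_pos
    _ ≤ f x + s / splus * -(d ^ 2 / (2 * L)) := by gcongr; linarith
    _ ≤ f x + β ^ 2 * -(d ^ 2 / (2 * L)) := by
        gcongr f x + ?_
        exact mul_le_mul_of_nonpos_right hratio (neg_nonpos.mpr (by positivity))
    _ = f x - β ^ 2 / (2 * L) * d ^ 2 := by ring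
    _ ≤ f x - β ^ 2 / (2 * m) * (1 - √(1 - m / L)) * d ^ 2 := by gcongr

/-- Decrease guarantee for any step size in the approximately-exact window `[β² s₊, s₊]`
along a unit descent direction, for an `m`-strongly convex function with `L`-Lipschitz
gradient: `f(x + s u) ≤ f(x) − (β²/(2m))(1 − √(1 − m/L)) ⟨u, ∇f(x)⟩²`. -/
theorem stmt_12 {n : ℕ} (f : EuclideanSpace ℝ (Fin n) → ℝ) (m L : ℝ)
    (hm : 0 < m) (hmL : m ≤ L)
    (hdiff : Differentiable ℝ f)
    (hconv : ConvexOn ℝ Set.univ (fun y => f y - m / 2 * ‖y‖ ^ 2))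
    (hlip : ∀ x y, ‖gradient f x - gradient f y‖ ≤ L * ‖x - y‖)
    (x u : EuclideanSpace ℝ (Fin n)) (hu : ‖u‖ = 1)
    (hdesc : ⟪u, gradient f x⟫ < 0)
    (splus : ℝ) (hsplus_pos : 0 < splus)
    (hsplus : ∀ s : ℝ, f (x + splus • u) ≤ f (x + s • u))
    (β : ℝ) (hβ : β ∈ Set.Ioo (0 : ℝ) 1)
    (s : ℝ) (hs : s ∈ Set.Icc (β ^ 2 * splus) splus) :
    f (x + s • u) ≤
      f x - β ^ 2 / (2 * m) * (1 - Real.sqrt (1 - m / L)) * ⟪u, gradient f x⟫ ^ 2 :=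
  stmt_12_general f m L hm hmL hdiff hconv hlip x u hu splus hsplus_pos hsplus β s hs
end

section
/- Let f : ℝⁿ → ℝ be differentiable, m-strongly convex, and have L-Lipschitz gradient with 0 < m ≤ L. Let x ∈ ℝⁿ, let d ≠ 0 be a descent direction at x (⟨d, ∇f(x)⟩ < 0), let t₊ > 0 be the minimizer of t ↦ f(x + t d), and let t_a > 0 be the unique positive solution of f(x + s d) = f(x) + (s/2)⟨d, ∇f(x)⟩. Then for every t ∈ (0, t₊], f(x + t d) ≤ f(x) + (min(t, t_a)/2)⟨d, ∇f(x)⟩. -/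
/-! f is convex, so φ(t) = f(x + t d) is a convex function of one variable. For t ≤ t_a, φ lies
below its chord over [0, t_a], which is exactly the Armijo line through φ(0) and φ(t_a). For
t_a ≤ t ≤ t₊, φ on the segment [t_a, t₊] is bounded by max(φ(t_a), φ(t₊)) = φ(t_a). -/

open Set
open scoped RealInnerProductSpace

theorem ConvexOn.of_convexOn_sub_half_mul_norm_sq {E : Type*} [NormedAddCommGroup E]
    [NormedSpace ℝ E] {f : E → ℝ} {m : ℝ} (hm : 0 ≤ m)
    (hf : ConvexOn ℝ univ fun y => f y - m / 2 * ‖y‖ ^ 2) : ConvexOn ℝ univ f := by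
  have hsq : ConvexOn ℝ univ fun y : E => m / 2 * ‖y‖ ^ 2 :=
    (convexOn_univ_norm.pow (fun _ _ => norm_nonneg _) 2).smul (by positivity)
  simpa [Pi.add_def] using hf.add hsq

theorem ConvexOn.comp_line {E : Type*} [AddCommGroup E] [Module ℝ E] {f : E → ℝ}
    (hf : ConvexOn ℝ univ f) (x d : E) : ConvexOn ℝ univ fun t : ℝ => f (x + t • d) := by
  simpa [Function.comp_def, AffineMap.lineMap_apply_module', add_comm]
    using hf.comp_affineMap (AffineMap.lineMap x (x + d))

theorem ConvexOn.le_chord {φ : ℝ → ℝ} {s : Set ℝ} (hφ : ConvexOn ℝ s φ) {a b t : ℝ}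
    (ha : a ∈ s) (hb : b ∈ s) (hab : a < b) (ht : t ∈ Icc a b) :
    φ t ≤ φ a + (t - a) / (b - a) * (φ b - φ a) := by
  have hba : 0 < b - a := sub_pos.2 hab
  have hcomb := hφ.2 ha hb (div_nonneg (sub_nonneg.2 ht.2) hba.le)
    (div_nonneg (sub_nonneg.2 ht.1) hba.le) (by field_simp [hba.ne']; ring)
  have hpt : ((b - t) / (b - a)) • a + ((t - a) / (b - a)) • b = t := by
    simp only [smul_eq_mul]; field_simp [hba.ne']; ring
  rw [hpt, smul_eq_mul, smul_eq_mul] at hcomb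
  calc φ t ≤ (b - t) / (b - a) * φ a + (t - a) / (b - a) * φ b := hcomb
    _ = φ a + (t - a) / (b - a) * (φ b - φ a) := by field_simp [hba.ne']; ring

theorem ConvexOn.le_armijo_min {φ : ℝ → ℝ} (hφ : ConvexOn ℝ univ φ)
    {c ta tplus t : ℝ} (hta_pos : 0 < ta) (hta : φ ta = φ 0 + ta / 2 * c)
    (hmin : φ tplus ≤ φ ta) (ht : t ∈ Ioc 0 tplus) :
    φ t ≤ φ 0 + min t ta / 2 * c := by
  rcases le_total t ta with h | h
  · rw [min_eq_left h]
    calc φ t ≤ φ 0 + (t - 0) / (ta - 0) * (φ ta - φ 0) :=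
          hφ.le_chord trivial trivial hta_pos ⟨ht.1.le, h⟩
      _ = φ 0 + t / 2 * c := by rw [hta]; field_simp [hta_pos.ne']; ring
  · rw [min_eq_right h, ← hta]
    have hseg : t ∈ segment ℝ ta tplus := by rw [segment_eq_Icc (h.trans ht.2)]; exact ⟨h, ht.2⟩
    simpa [max_eq_left hmin] using hφ.le_on_segment trivial trivial hseg

theorem stmt_14_general {n : ℕ} (f : EuclideanSpace ℝ (Fin n) → ℝ) (m : ℝ)
    (hm : 0 < m)
    (hconv : ConvexOn ℝ Set.univ (fun y => f y - m / 2 * ‖y‖ ^ 2))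
    (x d : EuclideanSpace ℝ (Fin n))
    (tplus : ℝ)
    (htplus : ∀ s : ℝ, f (x + tplus • d) ≤ f (x + s • d))
    (ta : ℝ) (hta_pos : 0 < ta)
    (hta : f (x + ta • d) = f x + ta / 2 * ⟪d, gradient f x⟫) :
    ∀ t : ℝ, t ∈ Set.Ioc (0 : ℝ) tplus →
      f (x + t • d) ≤ f x + min t ta / 2 * ⟪d, gradient f x⟫ := by
  intro t ht
  have hline := (hconv.of_convexOn_sub_half_mul_norm_sq hm.le).comp_line x d
  simpa using hline.le_armijo_min hta_pos (by simpa using hta) (htplus ta) ht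

/-- Any step size `t ∈ (0, t₊]` (where `t₊` is the exact line search minimizer) achieves
at least the Armijo decrease associated with `min(t, t_a)`, where `t_a` is the step size
satisfying the Armijo condition (parameter `1/2`) with equality. -/
theorem stmt_14 {n : ℕ} (f : EuclideanSpace ℝ (Fin n) → ℝ) (m L : ℝ)
    (hm : 0 < m) (hmL : m ≤ L)
    (hdiff : Differentiable ℝ f)
    (hconv : ConvexOn ℝ Set.univ (fun y => f y - m / 2 * ‖y‖ ^ 2))
    (hlip : ∀ x y, ‖gradient f x - gradient f y‖ ≤ L * ‖x - y‖)
    (x d : EuclideanSpace ℝ (Fin n)) (hd : d ≠ 0)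
    (hdesc : ⟪d, gradient f x⟫ < 0)
    (tplus : ℝ) (htplus_pos : 0 < tplus)
    (htplus : ∀ s : ℝ, f (x + tplus • d) ≤ f (x + s • d))
    (ta : ℝ) (hta_pos : 0 < ta)
    (hta : f (x + ta • d) = f x + ta / 2 * ⟪d, gradient f x⟫)
    (hta_unique : ∀ s : ℝ, 0 < s →
      f (x + s • d) = f x + s / 2 * ⟪d, gradient f x⟫ → s = ta) :
    ∀ t : ℝ, t ∈ Set.Ioc (0 : ℝ) tplus →
      f (x + t • d) ≤ f x + min t ta / 2 * ⟪d, gradient f x⟫ :=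
  stmt_14_general f m hm hconv x d tplus htplus ta hta_pos hta
end

section
/- Let f : ℝⁿ → ℝ be differentiable and m-strongly convex (m > 0) with minimizer x_*. Let Δ > 0, let x ∈ ℝⁿ with ‖x − x_*‖ ≥ Δ, let σ̃ ∈ (0, 1), and let ρ ∈ ℝⁿ with ‖ρ‖ ≤ σ̃ m Δ. Set d = −∇f(x) + ρ. Then d ≠ 0 and (1 − σ̃)/(1 + σ̃)² ≤ (−⟨d, ∇f(x)⟩)/‖d‖² ≤ 1/(1 − σ̃). -/
/-!
Restricting `f - (m/2)‖·‖²` to the line through `x_*` and `x` gives a convex function of one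
variable, whose derivative is monotone; as `∇f(x_*) = 0` this yields
`m‖x - x_*‖² ≤ ⟪∇f(x), x - x_*⟫`, hence `‖∇f(x)‖ ≥ m‖x - x_*‖ ≥ mΔ` and `‖ρ‖ ≤ σ̃‖∇f(x)‖`.
The bounds on `-⟪d, ∇f(x)⟫ / ‖d‖²` then only use this relative error bound: with `g = ∇f(x)`,
`(1 - σ̃)‖g‖ ≤ ‖d‖ ≤ (1 + σ̃)‖g‖`, `-⟪d, g⟫ = ‖g‖² - ⟪ρ, g⟫ ≥ (1 - σ̃)‖g‖²` and
`-⟪d, g⟫ = ‖d‖² - ⟪d, ρ⟫ ≤ ‖d‖² + ‖d‖‖ρ‖` with `(1 - σ̃)‖ρ‖ ≤ σ̃‖d‖`.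
-/

open scoped RealInnerProductSpace

open Set

section Convex

variable {E : Type*} [NormedAddCommGroup E] [NormedSpace ℝ E]

theorem ConvexOn.fderiv_apply_sub_le_fderiv_apply_sub {g : E → ℝ} (hg : ConvexOn ℝ univ g)
    (hdiff : Differentiable ℝ g) (x y : E) :
    fderiv ℝ g y (x - y) ≤ fderiv ℝ g x (x - y) := by
  set ℓ : ℝ →ᵃ[ℝ] E := AffineMap.lineMap y x
  have hline : ConvexOn ℝ univ (g ∘ ℓ) := by simpa using hg.comp_affineMap ℓ
  have hderiv (t : ℝ) : HasDerivAt (g ∘ ℓ) (fderiv ℝ g (ℓ t) (x - y)) t :=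
    (hdiff _).hasFDerivAt.comp_hasDerivAt t AffineMap.hasDerivAt_lineMap
  have hmono := hline.monotoneOn_deriv (fun t _ ↦ (hderiv t).differentiableAt)
    (mem_univ 0) (mem_univ 1) zero_le_one
  simpa [ℓ, (hderiv 0).deriv, (hderiv 1).deriv] using hmono

end Convex

section StrongConvexity

variable {E : Type*} [NormedAddCommGroup E] [InnerProductSpace ℝ E] [CompleteSpace E]
  {f : E → ℝ} {m : ℝ}

theorem ConvexOn.mul_sq_norm_sub_le_inner_gradient_sub
    (hconv : ConvexOn ℝ univ fun y ↦ f y - m / 2 * ‖y‖ ^ 2) (hdiff : Differentiable ℝ f)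
    (x y : E) : m * ‖x - y‖ ^ 2 ≤ ⟪gradient f x - gradient f y, x - y⟫ := by
  have hderiv (z : E) : fderiv ℝ (fun y ↦ f y - m / 2 * ‖y‖ ^ 2) z (x - y) =
      ⟪gradient f z, x - y⟫ - m * ⟪z, x - y⟫ := by
    have hF : HasFDerivAt (fun y ↦ f y - m / 2 * ‖y‖ ^ 2)
        (fderiv ℝ f z - (m / 2) • 2 • innerSL ℝ z) z :=
      (hdiff z).hasFDerivAt.sub ((hasStrictFDerivAt_norm_sq z).hasFDerivAt.const_mul (m / 2))
    rw [hF.fderiv]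
    simp only [sub_apply, smul_apply, coe_innerSL_apply,
      inner_gradient_left, nsmul_eq_mul, Nat.cast_ofNat, smul_eq_mul]
    ring
  have hmono := hconv.fderiv_apply_sub_le_fderiv_apply_sub
    (hdiff.sub ((differentiable_id.norm_sq ℝ).const_mul _)) x y
  rw [hderiv, hderiv] at hmono
  calc m * ‖x - y‖ ^ 2 = m * ⟪x, x - y⟫ - m * ⟪y, x - y⟫ := by
        rw [← mul_sub, ← inner_sub_left, real_inner_self_eq_norm_sq]
    _ ≤ ⟪gradient f x, x - y⟫ - ⟪gradient f y, x - y⟫ := by linarith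
    _ = ⟪gradient f x - gradient f y, x - y⟫ := (inner_sub_left _ _ _).symm

theorem IsLocalMin.gradient_eq_zero {x : E} (h : IsLocalMin f x) : gradient f x = 0 := by
  simp [gradient, h.fderiv_eq_zero]

theorem ConvexOn.mul_norm_sub_le_norm_gradient
    (hconv : ConvexOn ℝ univ fun y ↦ f y - m / 2 * ‖y‖ ^ 2) (hdiff : Differentiable ℝ f)
    {xstar : E} (hmin : IsLocalMin f xstar) (x : E) :
    m * ‖x - xstar‖ ≤ ‖gradient f x‖ := by
  rcases (norm_nonneg (x - xstar)).eq_or_lt with hzero | hpos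
  · rw [← hzero, mul_zero]
    exact norm_nonneg _
  refine le_of_mul_le_mul_right ?_ hpos
  calc m * ‖x - xstar‖ * ‖x - xstar‖ = m * ‖x - xstar‖ ^ 2 := by ring
    _ ≤ ⟪gradient f x, x - xstar⟫ := by
      simpa [hmin.gradient_eq_zero] using
        hconv.mul_sq_norm_sub_le_inner_gradient_sub hdiff x xstar
    _ ≤ ‖gradient f x‖ * ‖x - xstar‖ := real_inner_le_norm _ _

end StrongConvexity

section RelativeError

variable {E : Type*} [SeminormedAddCommGroup E] {d g : E} {σ : ℝ}

theorem norm_le_one_add_mul_norm_of_norm_add_le (herr : ‖d + g‖ ≤ σ * ‖g‖) :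
    ‖d‖ ≤ (1 + σ) * ‖g‖ :=
  calc ‖d‖ = ‖(d + g) - g‖ := by rw [add_sub_cancel_right]
    _ ≤ ‖d + g‖ + ‖g‖ := norm_sub_le _ _
    _ ≤ (1 + σ) * ‖g‖ := by linarith

theorem one_sub_mul_norm_le_norm_of_norm_add_le (herr : ‖d + g‖ ≤ σ * ‖g‖) :
    (1 - σ) * ‖g‖ ≤ ‖d‖ :=
  have : ‖g‖ ≤ ‖d + g‖ + ‖d‖ :=
    calc ‖g‖ = ‖(d + g) - d‖ := by rw [add_sub_cancel_left]
      _ ≤ ‖d + g‖ + ‖d‖ := norm_sub_le _ _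
  by linarith

end RelativeError

section PerturbedDirection

variable {E : Type*} [NormedAddCommGroup E] [InnerProductSpace ℝ E] {d g : E} {σ : ℝ}

theorem one_sub_mul_sq_norm_le_neg_inner_of_norm_add_le (herr : ‖d + g‖ ≤ σ * ‖g‖) :
    (1 - σ) * ‖g‖ ^ 2 ≤ -⟪d, g⟫ := by
  have hsplit : -⟪d, g⟫ = ‖g‖ ^ 2 - ⟪d + g, g⟫ := by
    rw [inner_add_left, real_inner_self_eq_norm_sq]
    ring
  have := real_inner_le_norm (d + g) g
  nlinarith [norm_nonneg g]

theorem one_sub_mul_neg_inner_le_sq_norm_of_norm_add_le (hσ0 : 0 ≤ σ) (hσ1 : σ ≤ 1)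
    (herr : ‖d + g‖ ≤ σ * ‖g‖) : (1 - σ) * -⟪d, g⟫ ≤ ‖d‖ ^ 2 := by
  have hsplit : -⟪d, g⟫ ≤ ‖d‖ ^ 2 + ‖d‖ * ‖d + g‖ := by
    have : -⟪d, g⟫ = ‖d‖ ^ 2 - ⟪d, d + g⟫ := by
      rw [inner_add_right, real_inner_self_eq_norm_sq]
      ring
    linarith [neg_le_of_abs_le (abs_real_inner_le_norm d (d + g))]
  have herr' : (1 - σ) * ‖d + g‖ ≤ σ * ‖d‖ :=
    calc (1 - σ) * ‖d + g‖ ≤ (1 - σ) * (σ * ‖g‖) := by gcongr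
      _ = σ * ((1 - σ) * ‖g‖) := by ring
      _ ≤ σ * ‖d‖ := by gcongr; exact one_sub_mul_norm_le_norm_of_norm_add_le herr
  calc (1 - σ) * -⟪d, g⟫ ≤ (1 - σ) * (‖d‖ ^ 2 + ‖d‖ * ‖d + g‖) := by gcongr
    _ = (1 - σ) * ‖d‖ ^ 2 + ‖d‖ * ((1 - σ) * ‖d + g‖) := by ring
    _ ≤ (1 - σ) * ‖d‖ ^ 2 + ‖d‖ * (σ * ‖d‖) := by gcongr
    _ = ‖d‖ ^ 2 := by ring

theorem neg_inner_div_sq_norm_bounds_of_norm_add_le (hσ : σ < 1) (hg : g ≠ 0)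
    (herr : ‖d + g‖ ≤ σ * ‖g‖) :
    d ≠ 0 ∧ (1 - σ) / (1 + σ) ^ 2 ≤ -⟪d, g⟫ / ‖d‖ ^ 2 ∧ -⟪d, g⟫ / ‖d‖ ^ 2 ≤ 1 / (1 - σ) := by
  have hg' : 0 < ‖g‖ := norm_pos_iff.mpr hg
  have hσ0 : 0 ≤ σ := nonneg_of_mul_nonneg_left ((norm_nonneg _).trans herr) hg'
  have hd : 0 < ‖d‖ :=
    lt_of_lt_of_le (by nlinarith) (one_sub_mul_norm_le_norm_of_norm_add_le herr)
  refine ⟨norm_pos_iff.mp hd, ?_, ?_⟩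
  · rw [div_le_div_iff₀ (by positivity) (by positivity)]
    have hsq : ‖d‖ ^ 2 ≤ (1 + σ) ^ 2 * ‖g‖ ^ 2 := by
      rw [← mul_pow]
      exact pow_le_pow_left₀ hd.le (norm_le_one_add_mul_norm_of_norm_add_le herr) 2
    nlinarith [one_sub_mul_sq_norm_le_neg_inner_of_norm_add_le herr]
  · rw [div_le_div_iff₀ (by positivity) (by linarith)]
    linarith [one_sub_mul_neg_inner_le_sq_norm_of_norm_add_le hσ0 hσ.le herr]

end PerturbedDirection

/-- Bounds on `γ = −⟨d, ∇f(x)⟩/‖d‖²` for a search direction `d = −∇f(x) + ρ` obtained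
from a gradient approximation with additive error `‖ρ‖ ≤ σ̃ m Δ`, when `f` is
`m`-strongly convex and `‖x − x_*‖ ≥ Δ`. -/
theorem stmt_15 {n : ℕ} (f : EuclideanSpace ℝ (Fin n) → ℝ) (m : ℝ) (hm : 0 < m)
    (hdiff : Differentiable ℝ f)
    (hconv : ConvexOn ℝ Set.univ (fun y => f y - m / 2 * ‖y‖ ^ 2))
    (xstar : EuclideanSpace ℝ (Fin n)) (hmin : ∀ y, f xstar ≤ f y)
    (Δ : ℝ) (hΔ : 0 < Δ)
    (x : EuclideanSpace ℝ (Fin n)) (hx : Δ ≤ ‖x - xstar‖)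
    (σt : ℝ) (hσt : σt ∈ Set.Ioo (0 : ℝ) 1)
    (ρ : EuclideanSpace ℝ (Fin n)) (hρ : ‖ρ‖ ≤ σt * m * Δ)
    (d : EuclideanSpace ℝ (Fin n)) (hd : d = -gradient f x + ρ) :
    d ≠ 0 ∧
      (1 - σt) / (1 + σt) ^ 2 ≤ -⟪d, gradient f x⟫ / ‖d‖ ^ 2 ∧
      -⟪d, gradient f x⟫ / ‖d‖ ^ 2 ≤ 1 / (1 - σt) := by
  obtain ⟨hσ0, hσ1⟩ := hσt
  have hgrad : m * Δ ≤ ‖gradient f x‖ :=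
    (mul_le_mul_of_nonneg_left hx hm.le).trans
      (hconv.mul_norm_sub_le_norm_gradient hdiff (Filter.Eventually.of_forall hmin) x)
  have hg : gradient f x ≠ 0 := norm_pos_iff.mp ((mul_pos hm hΔ).trans_le hgrad)
  have herr : ‖d + gradient f x‖ ≤ σt * ‖gradient f x‖ := by
    rw [show d + gradient f x = ρ by rw [hd]; abel]
    calc ‖ρ‖ ≤ σt * (m * Δ) := by rwa [← mul_assoc]
      _ ≤ σt * ‖gradient f x‖ := by gcongr
  exact neg_inner_div_sq_norm_bounds_of_norm_add_le hσ1 hg herr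
end
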